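/- In the reduction instance above, for any string S of length k+1 of the form S 0 = $ and S (h+1) = v_{h,i_h}, the total optimal cost (sum over N copies of each 𝒱_i of Ham(S,𝒱_i), plus the sum over edges j of the minimum alignment distance of S in ℰ_j) equals N(n−1)k + mk − |E(K)|, where K = {v_{h,i_h} : h < k} and |E(K)| is the number of edges with both endpoints in K. -/

import Mathlib

/-!
Write `S = $ v_{1,i_1} … v_{k,i_k}`. Since the symbols `v_{h,i}` are pairwise distinct, `S` and
`𝒱_i` agree exactly at `$` and at the rows `h` with `i_h = i`, so summing over `i` every row
contributes `n - 1` mismatches. The offset-`0` window of `ℰ_j` shifts the vertex symbols one place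
off their rows and only matches `S` at `$`, costing `k`. The offset-`1` window mismatches `$`
against `∘` and can match `S` only at the two endpoint rows of edge `j`, costing
`k + 1 - [first endpoint in K] - [second endpoint in K]`. The minimum is therefore `k - 1` when
both endpoints lie in `K` and `k` otherwise.
-/

/-- Hamming distance between two strings of length `n`. -/
def ham {n : ℕ} {α : Type*} [DecidableEq α] (S T : Fin n → α) : ℕ :=
  (Finset.univ.filter fun i => S i ≠ T i).card

/-- The vertex string `𝒱_i = $ v_{1,i} … v_{k,i}`. -/
def Vstr {k n : ℕ} {α : Type*} (dollar : α) (v : Fin k → Fin n → α) (i : Fin n) :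
    Fin (k+1) → α := Fin.cons dollar fun h => v h i

/-- The edge string `ℰ`. -/
def Estr {k n : ℕ} {α : Type*} (dollar circ : α) (v : Fin k → Fin n → α)
    (hs ht : Fin k) (js jt : Fin n) : Fin (k+2) → α := fun q =>
  if q.val = 0 then dollar
  else if q.val = hs.val + 2 then v hs js
  else if q.val = ht.val + 2 then v ht jt
  else circ

/-- The length-`L` window of a length-`(L+1)` string at offset `p ∈ {0,1}`. -/
def window {L : ℕ} {α : Type*} (T : Fin (L+1) → α) (p : Fin 2) : Fin L → α :=
  fun i => T ⟨p.val + i.val, by have := p.2; have := i.2; omega⟩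

open Finset

section Hamming

variable {α : Type*} [DecidableEq α] {n : ℕ}

lemma ham_eq_ite_add_ham_succ (S T : Fin (n + 1) → α) :
    ham S T = (if S 0 = T 0 then 0 else 1) + ham (fun i => S i.succ) (fun i => T i.succ) := by
  simp only [ham, card_filter, Fin.sum_univ_succ, ite_not]

lemma ham_eq_of_forall_ne {s t : Fin n → α} (hst : ∀ i, s i ≠ t i) : ham s t = n := by
  simp [ham, hst]

lemma ham_add_ite_add_ite_eq {s t : Fin n → α} {a b : Fin n} (hab : a ≠ b)
    (hagree : ∀ i, s i = t i → i = a ∨ i = b) :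
    ham s t + ((if s a = t a then 1 else 0) + (if s b = t b then 1 else 0)) = n := by
  have hpair : #(univ.filter fun i => s i = t i) =
      (if s a = t a then 1 else 0) + (if s b = t b then 1 else 0) := by
    rw [← sum_pair (f := fun i => if s i = t i then 1 else 0) hab, ← card_filter]
    congr 1
    ext i
    simp only [mem_filter, mem_univ, true_and, mem_insert, mem_singleton]
    exact ⟨fun h => ⟨hagree i h, h⟩, fun h => h.2⟩
  rw [← hpair, ham, add_comm, card_filter_add_card_filter_not, card_univ,
    Fintype.card_fin]

end Hamming

lemma window_zero {L : ℕ} {α : Type*} (T : Fin (L + 1) → α) :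
    window T 0 = fun i => T i.castSucc := by
  funext i
  simp only [window, Fin.val_zero, zero_add]
  rfl

lemma window_one {L : ℕ} {α : Type*} (T : Fin (L + 1) → α) :
    window T 1 = fun i => T i.succ := by
  funext i
  simp only [window, Fin.val_one]
  congr 1
  ext
  simp [add_comm]

lemma sum_card_filter_ne {ι β : Type*} [Fintype ι] [Fintype β] [DecidableEq β] (f : ι → β) :
    ∑ b, #(univ.filter fun a => f a ≠ b) = Fintype.card ι * (Fintype.card β - 1) := by
  calc ∑ b, #(univ.filter fun a => f a ≠ b)
      = ∑ b, ∑ a, if f a ≠ b then 1 else 0 := by simp only [card_filter]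
    _ = ∑ a, #(univ.filter fun b => f a ≠ b) := by rw [sum_comm]; simp only [card_filter]
    _ = Fintype.card ι * (Fintype.card β - 1) := by simp [filter_ne, card_univ]

lemma eq_iff_of_injective_uncurry {κ ι α : Type*} {v : κ → ι → α}
    (hv : Function.Injective fun q : κ × ι => v q.1 q.2) {h h' : κ} {a b : ι} :
    v h a = v h' b ↔ h = h' ∧ a = b :=
  (hv.eq_iff (a := (h, a)) (b := (h', b))).trans Prod.ext_iff

section Reduction

variable {α : Type*} {k n : ℕ} {dollar circ : α} {v : Fin k → Fin n → α}

lemma Estr_one (a b : Fin k) (ja jb : Fin n) : Estr dollar circ v a b ja jb 1 = circ := by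
  simp [Estr]

lemma Estr_succ_succ (a b : Fin k) (ja jb : Fin n) (h : Fin k) :
    Estr dollar circ v a b ja jb h.succ.succ =
      if h = a then v a ja else if h = b then v b jb else circ := by
  simp [Estr, Fin.ext_iff]

lemma Estr_succ_castSucc_ne (hv : Function.Injective fun q : Fin k × Fin n => v q.1 q.2)
    (hvc : ∀ h i, v h i ≠ circ) (a b : Fin k) (ja jb : Fin n) (h : Fin k) (x : Fin n) :
    Estr dollar circ v a b ja jb h.succ.castSucc ≠ v h x := by
  simp only [Estr, Fin.val_castSucc, Fin.val_succ, Nat.add_one_ne_zero, if_false]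
  split_ifs with ha hb
  · rw [Ne, eq_iff_of_injective_uncurry hv]
    rintro ⟨rfl, -⟩
    omega
  · rw [Ne, eq_iff_of_injective_uncurry hv]
    rintro ⟨rfl, -⟩
    omega
  · exact (hvc h x).symm

variable [DecidableEq α]

lemma ham_cons_Vstr (hv : Function.Injective fun q : Fin k × Fin n => v q.1 q.2)
    (idx : Fin k → Fin n) (i : Fin n) :
    ham (Fin.cons dollar fun h => v h (idx h)) (Vstr dollar v i) =
      #(univ.filter fun h => idx h ≠ i) := by
  rw [ham_eq_ite_add_ham_succ]
  simp [Vstr, ham, eq_iff_of_injective_uncurry hv]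

lemma ham_window_zero_Estr (hv : Function.Injective fun q : Fin k × Fin n => v q.1 q.2)
    (hvc : ∀ h i, v h i ≠ circ) (idx : Fin k → Fin n) (a b : Fin k) (ja jb : Fin n) :
    ham (Fin.cons dollar fun h => v h (idx h)) (window (Estr dollar circ v a b ja jb) 0) = k := by
  rw [window_zero, ham_eq_ite_add_ham_succ]
  simp only [Fin.cons_succ]
  rw [ham_eq_of_forall_ne fun h => (Estr_succ_castSucc_ne hv hvc a b ja jb h (idx h)).symm]
  simp [Estr]

lemma ham_window_one_Estr_add (hv : Function.Injective fun q : Fin k × Fin n => v q.1 q.2)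
    (hvc : ∀ h i, v h i ≠ circ) (hdc : dollar ≠ circ) (idx : Fin k → Fin n) {a b : Fin k}
    (hab : a ≠ b) (ja jb : Fin n) :
    ham (Fin.cons dollar fun h => v h (idx h)) (window (Estr dollar circ v a b ja jb) 1) +
      ((if ja = idx a then 1 else 0) + (if jb = idx b then 1 else 0)) = k + 1 := by
  have hrows := ham_add_ite_add_ite_eq (s := fun h => v h (idx h))
    (t := fun h => Estr dollar circ v a b ja jb h.succ.succ) hab fun h hh => by
      simp only [Estr_succ_succ] at hh
      split_ifs at hh with ha hb
      exacts [Or.inl ha, Or.inr hb, absurd hh (hvc h (idx h))]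
  have hmatch_a : v a (idx a) = Estr dollar circ v a b ja jb a.succ.succ ↔ ja = idx a := by
    rw [Estr_succ_succ, if_pos rfl, eq_iff_of_injective_uncurry hv]
    exact (and_iff_right rfl).trans eq_comm
  have hmatch_b : v b (idx b) = Estr dollar circ v a b ja jb b.succ.succ ↔ jb = idx b := by
    rw [Estr_succ_succ, if_neg hab.symm, if_pos rfl, eq_iff_of_injective_uncurry hv]
    exact (and_iff_right rfl).trans eq_comm
  simp only [hmatch_a, hmatch_b] at hrows
  rw [window_one, ham_eq_ite_add_ham_succ]
  simp only [Fin.cons_zero, Fin.succ_zero_eq_one, Estr_one, if_neg hdc, Fin.cons_succ]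
  omega

lemma min_ham_window_Estr_add (hv : Function.Injective fun q : Fin k × Fin n => v q.1 q.2)
    (hvc : ∀ h i, v h i ≠ circ) (hdc : dollar ≠ circ) (idx : Fin k → Fin n) {a b : Fin k}
    (hab : a ≠ b) (ja jb : Fin n) :
    min (ham (Fin.cons dollar fun h => v h (idx h)) (window (Estr dollar circ v a b ja jb) 0))
        (ham (Fin.cons dollar fun h => v h (idx h)) (window (Estr dollar circ v a b ja jb) 1)) +
      (if ja = idx a ∧ jb = idx b then 1 else 0) = k := by
  have hone := ham_window_one_Estr_add hv hvc hdc idx hab ja jb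
  rw [ham_window_zero_Estr hv hvc]
  split_ifs at hone ⊢ <;> omega

end Reduction

theorem stmt9_general {k n m : ℕ} {α : Type*} [DecidableEq α]
    (dollar circ : α) (v : Fin k → Fin n → α)
    (hv : Function.Injective fun q : Fin k × Fin n => v q.1 q.2)
    (hvc : ∀ h i, v h i ≠ circ) (hdc : dollar ≠ circ)
    (hs ht : Fin m → Fin k) (js jt : Fin m → Fin n)
    (hne : ∀ j, hs j ≠ ht j)
    (idx : Fin k → Fin n)
    (S : Fin (k+1) → α) (hS : S = Fin.cons dollar fun h => v h (idx h)) :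
    (m * (k+2) + 1) * (∑ i, ham S (Vstr dollar v i)) +
      ∑ j, min
        (ham S (window (Estr dollar circ v (hs j) (ht j) (js j) (jt j)) 0))
        (ham S (window (Estr dollar circ v (hs j) (ht j) (js j) (jt j)) 1)) =
    (m * (k+2) + 1) * (n - 1) * k + m * k -
      (Finset.univ.filter fun j : Fin m => js j = idx (hs j) ∧ jt j = idx (ht j)).card := by
  subst hS
  have hvertex : ∑ i, ham (Fin.cons dollar fun h => v h (idx h)) (Vstr dollar v i) =
      (n - 1) * k := by
    simp_rw [ham_cons_Vstr hv, sum_card_filter_ne, Fintype.card_fin, mul_comm]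
  have hedges := congrArg (fun f => ∑ j, f j)
    (funext fun j => min_ham_window_Estr_add hv hvc hdc idx (hne j) (js j) (jt j))
  simp only [sum_add_distrib, sum_const, card_univ, Fintype.card_fin, smul_eq_mul,
    ← card_filter] at hedges
  rw [hvertex, ← mul_assoc]
  omega

theorem stmt9 {k n m : ℕ} {α : Type*} [DecidableEq α]
    (hk : 1 ≤ k) (hn : 1 ≤ n)
    (dollar circ : α) (v : Fin k → Fin n → α)
    (hv : Function.Injective fun q : Fin k × Fin n => v q.1 q.2)
    (hvd : ∀ h i, v h i ≠ dollar) (hvc : ∀ h i, v h i ≠ circ) (hdc : dollar ≠ circ)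
    (hs ht : Fin m → Fin k) (js jt : Fin m → Fin n)
    (hne : ∀ j, hs j ≠ ht j)
    (idx : Fin k → Fin n)
    (S : Fin (k+1) → α) (hS : S = Fin.cons dollar fun h => v h (idx h)) :
    (m * (k+2) + 1) * (∑ i, ham S (Vstr dollar v i)) +
      ∑ j, min
        (ham S (window (Estr dollar circ v (hs j) (ht j) (js j) (jt j)) 0))
        (ham S (window (Estr dollar circ v (hs j) (ht j) (js j) (jt j)) 1)) =
    (m * (k+2) + 1) * (n - 1) * k + m * k -
      (Finset.univ.filter fun j : Fin m => js j = idx (hs j) ∧ jt j = idx (ht j)).card :=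
  stmt9_general dollar circ v hv hvc hdc hs ht js jt hne idx S hS
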